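/- arXiv:2404.07732 — 4 statements merged into one kernel-verified Lean document; each statement's English description precedes it below -/
import Mathlib

section
/- Soft Bellman optimality equation: For a finite-horizon MDP and temperature α > 0, the optimal soft value function satisfies, for every state s and every timestep t ∈ {0,…,H}, V*_sft(s,t) = α·log(Σ_{a∈A} exp(Q*_sft(s,a,t)/α)). -/
open Finset

/-- A finite-horizon MDP with state space `S`, action space `A`, transition
function `p`, reward function `R`, and horizon `H`. -/
structure FinMDP (S A : Type) [Fintype S] [Fintype A] : Type where
  p : S → A → S → ℝ
  p_nonneg : ∀ s a s', 0 ≤ p s a s'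
  p_sum : ∀ s a, ∑ s', p s a s' = 1
  R : S → A → ℝ
  H : ℕ

variable {S A : Type} [Fintype S] [Fintype A]

/-- `π t s` is a probability distribution on actions for every timestep `t` and state `s`. -/
def IsPolicy (π : ℕ → S → A → ℝ) : Prop :=
  ∀ t s, (∀ a, 0 ≤ π t s a) ∧ ∑ a, π t s a = 1

/-- Shannon entropy of a distribution on a finite set (note `Real.log 0 = 0`). -/
noncomputable def shannonEntropy (ρ : A → ℝ) : ℝ :=
  -∑ a, ρ a * Real.log (ρ a)

/-- Value recursion indexed by the number `r` of remaining steps: at `r + 1` remaining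
steps the current timestep is `H - r`. -/
noncomputable def Vrec (M : FinMDP S A) (π : ℕ → S → A → ℝ) : ℕ → S → ℝ
  | 0, _ => 0
  | r + 1, s =>
      ∑ a, π (M.H - r) s a * (M.R s a + ∑ s', M.p s a s' * Vrec M π r s')

/-- `Vpi M π t s = V^π(s,t)`: value of policy `π` at state `s` and timestep `t`. -/
noncomputable def Vpi (M : FinMDP S A) (π : ℕ → S → A → ℝ) (t : ℕ) (s : S) : ℝ :=
  Vrec M π (M.H + 1 - t) s

/-- `Qpi M π t s a = Q^π(s,a,t)`. -/
noncomputable def Qpi (M : FinMDP S A) (π : ℕ → S → A → ℝ) (t : ℕ) (s : S) (a : A) : ℝ :=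
  M.R s a + ∑ s', M.p s a s' * Vpi M π (t + 1) s'

/-- Optimal value `V*(s,t) = sup_π V^π(s,t)`. -/
noncomputable def Vstar (M : FinMDP S A) (t : ℕ) (s : S) : ℝ :=
  ⨆ π : {π : ℕ → S → A → ℝ // IsPolicy π}, Vpi M π.1 t s

/-- Optimal Q-value `Q*(s,a,t)`. -/
noncomputable def Qstar (M : FinMDP S A) (t : ℕ) (s : S) (a : A) : ℝ :=
  M.R s a + ∑ s', M.p s a s' * Vstar M (t + 1) s'

/-- Soft value recursion with temperature `α`. -/
noncomputable def VrecSft (M : FinMDP S A) (α : ℝ) (π : ℕ → S → A → ℝ) : ℕ → S → ℝ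
  | 0, _ => 0
  | r + 1, s =>
      (∑ a, π (M.H - r) s a * (M.R s a + ∑ s', M.p s a s' * VrecSft M α π r s'))
        + α * shannonEntropy (π (M.H - r) s)

/-- `VpiSft M α π t s = V^π_sft(s,t)`. -/
noncomputable def VpiSft (M : FinMDP S A) (α : ℝ) (π : ℕ → S → A → ℝ) (t : ℕ) (s : S) : ℝ :=
  VrecSft M α π (M.H + 1 - t) s

/-- `QpiSft M α π t s a = Q^π_sft(s,a,t)`. -/
noncomputable def QpiSft (M : FinMDP S A) (α : ℝ) (π : ℕ → S → A → ℝ) (t : ℕ) (s : S) (a : A) : ℝ :=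
  M.R s a + ∑ s', M.p s a s' * VpiSft M α π (t + 1) s'

/-- Optimal soft value `V*_sft(s,t) = sup_π V^π_sft(s,t)`. -/
noncomputable def VstarSft (M : FinMDP S A) (α : ℝ) (t : ℕ) (s : S) : ℝ :=
  ⨆ π : {π : ℕ → S → A → ℝ // IsPolicy π}, VpiSft M α π.1 t s

/-- Optimal soft Q-value `Q*_sft(s,a,t)`. -/
noncomputable def QstarSft (M : FinMDP S A) (α : ℝ) (t : ℕ) (s : S) (a : A) : ℝ :=
  M.R s a + ∑ s', M.p s a s' * VstarSft M α (t + 1) s'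

/-- Cumulative expected entropy recursion. -/
noncomputable def hrec (M : FinMDP S A) (π : ℕ → S → A → ℝ) : ℕ → S → ℝ
  | 0, _ => 0
  | r + 1, s =>
      shannonEntropy (π (M.H - r) s)
        + ∑ a, π (M.H - r) s a * ∑ s', M.p s a s' * hrec M π r s'

/-- `hpi M π t s = h^π(s,t)`: cumulative expected entropy of policy `π` from `(s,t)`. -/
noncomputable def hpi (M : FinMDP S A) (π : ℕ → S → A → ℝ) (t : ℕ) (s : S) : ℝ :=
  hrec M π (M.H + 1 - t) s

/-- Simple regret of policy `ψ` at `(s,t)`. -/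
noncomputable def reg (M : FinMDP S A) (ψ : ℕ → S → A → ℝ) (t : ℕ) (s : S) : ℝ :=
  Vstar M t s - Vpi M ψ t s

/-- Immediate simple regret of policy `ψ` at `(s,t)`. -/
noncomputable def regI (M : FinMDP S A) (ψ : ℕ → S → A → ℝ) (t : ℕ) (s : S) : ℝ :=
  Vstar M t s - ∑ a, ψ t s a * Qstar M t s a

lemma gibbs_le [Nonempty A] {α : ℝ} (hα : 0 < α) (ρ : A → ℝ)
    (hnn : ∀ a, 0 ≤ ρ a) (hsum : ∑ a, ρ a = 1) (q : A → ℝ) :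
    ∑ a, ρ a * q a + α * shannonEntropy ρ ≤ α * Real.log (∑ a, Real.exp (q a / α)) := by
  classical
  set x : A → ℝ := fun a => if ρ a = 0 then 1 else Real.exp (q a / α) / ρ a with hx
  have hxpos : ∀ a, 0 < x a := by
    intro a
    by_cases h : ρ a = 0
    · simp [hx, h]
    · have hρ : 0 < ρ a := (hnn a).lt_of_ne (Ne.symm h)
      simp only [hx, h, if_false]
      positivity
  have jensen : ∑ a, ρ a * Real.log (x a) ≤ Real.log (∑ a, ρ a * x a) := by
    have := (strictConcaveOn_log_Ioi.concaveOn).le_map_sum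
      (t := Finset.univ) (w := ρ) (p := x) (fun a _ => hnn a) (by simpa using hsum)
      (fun a _ => hxpos a)
    simpa [smul_eq_mul] using this
  have hlog_eq : ∀ a, ρ a * Real.log (x a) = ρ a * (q a / α) - ρ a * Real.log (ρ a) := by
    intro a
    by_cases h : ρ a = 0
    · simp [hx, h]
    · simp only [hx, h, if_false]
      rw [Real.log_div (Real.exp_ne_zero _) h, Real.log_exp]
      ring
  have hsum_le : ∑ a, ρ a * x a ≤ ∑ a, Real.exp (q a / α) := by
    apply Finset.sum_le_sum
    intro a _
    by_cases h : ρ a = 0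
    · simp only [h, zero_mul]
      positivity
    · simp only [hx, h, if_false]
      rw [mul_comm, div_mul_cancel₀ _ h]
  have hpos : 0 < ∑ a, ρ a * x a := by
    obtain ⟨a, ha⟩ : ∃ a, ρ a ≠ 0 := by
      by_contra h
      push_neg at h
      simp [h] at hsum
    have h1 : 0 < ρ a * x a := mul_pos ((hnn a).lt_of_ne (Ne.symm ha)) (hxpos a)
    exact h1.trans_le (Finset.single_le_sum
      (fun b _ => mul_nonneg (hnn b) (hxpos b).le) (Finset.mem_univ a))
  have key : ∑ a, ρ a * Real.log (x a) = (∑ a, ρ a * q a) / α + shannonEntropy ρ := by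
    rw [Finset.sum_congr rfl (fun a _ => hlog_eq a), Finset.sum_sub_distrib, shannonEntropy]
    simp_rw [← mul_div_assoc]
    rw [← Finset.sum_div]
    ring
  have lhs_eq : ∑ a, ρ a * q a + α * shannonEntropy ρ = α * ∑ a, ρ a * Real.log (x a) := by
    rw [key, mul_add, mul_div_cancel₀ _ hα.ne']
  rw [lhs_eq]
  have := Real.log_le_log hpos hsum_le
  exact mul_le_mul_of_nonneg_left (jensen.trans this) hα.le

lemma gibbs_eq [Nonempty A] {α : ℝ} (hα : 0 < α) (q : A → ℝ) :
    ∑ a, (Real.exp (q a / α) / ∑ b, Real.exp (q b / α)) * q a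
      + α * shannonEntropy (fun a => Real.exp (q a / α) / ∑ b, Real.exp (q b / α))
      = α * Real.log (∑ b, Real.exp (q b / α)) := by
  classical
  set Z := ∑ b, Real.exp (q b / α) with hZdef
  have hZ : 0 < Z := Finset.sum_pos (fun b _ => Real.exp_pos _) Finset.univ_nonempty
  have hρsum : ∑ a, Real.exp (q a / α) / Z = 1 := by
    rw [← Finset.sum_div, ← hZdef, div_self hZ.ne']
  have hlog : ∀ a, Real.log (Real.exp (q a / α) / Z) = q a / α - Real.log Z := by
    intro a
    rw [Real.log_div (Real.exp_ne_zero _) hZ.ne', Real.log_exp]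
  unfold shannonEntropy
  simp only [hlog, mul_sub]
  rw [Finset.sum_sub_distrib, ← Finset.sum_mul, hρsum, one_mul]
  have hterm : ∀ a, Real.exp (q a / α) / Z * (q a / α)
      = (Real.exp (q a / α) / Z * q a) / α := by
    intro a; ring
  simp only [hterm]
  rw [← Finset.sum_div]
  field_simp
  ring

lemma entropy_le_log_card [Nonempty A] (ρ : A → ℝ)
    (hnn : ∀ a, 0 ≤ ρ a) (hsum : ∑ a, ρ a = 1) :
    shannonEntropy ρ ≤ Real.log (Fintype.card A) := by
  have := gibbs_le (α := 1) one_pos ρ hnn hsum (fun _ => 0)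
  simpa using this

omit [Fintype S] in
lemma exists_policy [Nonempty A] : ∃ π : ℕ → S → A → ℝ, IsPolicy π := by
  refine ⟨fun _ _ _ => (Fintype.card A : ℝ)⁻¹, fun t s => ⟨fun a => by positivity, ?_⟩⟩
  have h : (Fintype.card A : ℝ) ≠ 0 := Nat.cast_ne_zero.2 Fintype.card_ne_zero
  simp [Finset.sum_const, Finset.card_univ, nsmul_eq_mul, h]

instance polNonempty [Nonempty A] : Nonempty {π : ℕ → S → A → ℝ // IsPolicy π} :=
  nonempty_subtype.2 exists_policy

lemma vrecSft_bound [Nonempty A] (M : FinMDP S A) {α : ℝ} (hα : 0 < α) :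
    ∀ r : ℕ, ∃ C : ℝ, ∀ π : ℕ → S → A → ℝ, IsPolicy π → ∀ s, VrecSft M α π r s ≤ C := by
  intro r
  induction r with
  | zero => exact ⟨0, fun π _ s => le_of_eq rfl⟩
  | succ r ih =>
    obtain ⟨C, hC⟩ := ih
    obtain ⟨B, hB⟩ := Finite.exists_le (fun p : S × A => M.R p.1 p.2)
    refine ⟨B + C + α * Real.log (Fintype.card A), fun π hπ s => ?_⟩
    obtain ⟨hnn, hsum⟩ := hπ (M.H - r) s
    show (∑ a, π (M.H - r) s a * (M.R s a + ∑ s', M.p s a s' * VrecSft M α π r s'))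
        + α * shannonEntropy (π (M.H - r) s) ≤ _
    have h1 : ∑ a, π (M.H - r) s a * (M.R s a + ∑ s', M.p s a s' * VrecSft M α π r s')
        ≤ ∑ a, π (M.H - r) s a * (B + C) := by
      apply Finset.sum_le_sum; intro a _
      apply mul_le_mul_of_nonneg_left _ (hnn a)
      apply add_le_add (hB (s, a))
      calc ∑ s', M.p s a s' * VrecSft M α π r s' ≤ ∑ s', M.p s a s' * C :=
            Finset.sum_le_sum fun s' _ =>
              mul_le_mul_of_nonneg_left (hC π hπ s') (M.p_nonneg s a s')
        _ = C := by rw [← Finset.sum_mul, M.p_sum, one_mul]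
    have h2 : α * shannonEntropy (π (M.H - r) s) ≤ α * Real.log (Fintype.card A) :=
      mul_le_mul_of_nonneg_left (entropy_le_log_card _ hnn hsum) hα.le
    have h3 : ∑ a, π (M.H - r) s a * (B + C) = B + C := by
      rw [← Finset.sum_mul, hsum, one_mul]
    linarith

lemma vrec_bddAbove [Nonempty A] (M : FinMDP S A) {α : ℝ} (hα : 0 < α) (r : ℕ) (s : S) :
    BddAbove (Set.range fun π : {π : ℕ → S → A → ℝ // IsPolicy π} => VrecSft M α π.1 r s) := by
  obtain ⟨C, hC⟩ := vrecSft_bound M hα r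
  exact ⟨C, by rintro _ ⟨π, rfl⟩; exact hC π.1 π.2 s⟩

/-- The optimal soft value as a function of remaining steps. -/
noncomputable def Vsup (M : FinMDP S A) (α : ℝ) (r : ℕ) (s : S) : ℝ :=
  ⨆ π : {π : ℕ → S → A → ℝ // IsPolicy π}, VrecSft M α π.1 r s

/-- Soft Q backup with `r` remaining steps after the transition. -/
noncomputable def QQ (M : FinMDP S A) (α : ℝ) (r : ℕ) (s : S) (a : A) : ℝ :=
  M.R s a + ∑ s', M.p s a s' * Vsup M α r s'

/-- The softmax policy with respect to optimal soft Q-values. -/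
noncomputable def pistar (M : FinMDP S A) (α : ℝ) : ℕ → S → A → ℝ :=
  fun t s a => Real.exp (QstarSft M α t s a / α) / ∑ b, Real.exp (QstarSft M α t s b / α)

lemma pistar_isPolicy [Nonempty A] (M : FinMDP S A) (α : ℝ) : IsPolicy (pistar M α) := by
  intro t s
  have hZ : 0 < ∑ b, Real.exp (QstarSft M α t s b / α) :=
    Finset.sum_pos (fun b _ => Real.exp_pos _) Finset.univ_nonempty
  constructor
  · intro a
    unfold pistar
    positivity
  · unfold pistar
    rw [← Finset.sum_div, div_self hZ.ne']

lemma step_formula [Nonempty A] (M : FinMDP S A) {α : ℝ} (hα : 0 < α) (r : ℕ) (hr : r ≤ M.H)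
    (hIH : ∀ s', VrecSft M α (pistar M α) r s' = Vsup M α r s') (s : S) :
    VrecSft M α (pistar M α) (r + 1) s = α * Real.log (∑ a, Real.exp (QQ M α r s a / α))
      ∧ Vsup M α (r + 1) s = α * Real.log (∑ a, Real.exp (QQ M α r s a / α)) := by
  have hQstar : ∀ a, QstarSft M α (M.H - r) s a = QQ M α r s a := by
    intro a
    have hidx : M.H + 1 - (M.H - r + 1) = r := by omega
    simp only [QstarSft, QQ, VstarSft, VpiSft, Vsup, hidx]
  have hfun : pistar M α (M.H - r) s
      = fun a => Real.exp (QQ M α r s a / α) / ∑ b, Real.exp (QQ M α r s b / α) := by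
    funext a
    simp only [pistar, hQstar]
  have part1 : VrecSft M α (pistar M α) (r + 1) s
      = α * Real.log (∑ a, Real.exp (QQ M α r s a / α)) := by
    show (∑ a, pistar M α (M.H - r) s a
          * (M.R s a + ∑ s', M.p s a s' * VrecSft M α (pistar M α) r s'))
        + α * shannonEntropy (pistar M α (M.H - r) s) = _
    simp only [hIH]
    rw [hfun]
    have := gibbs_eq hα (fun a => QQ M α r s a)
    simpa [QQ] using this
  refine ⟨part1, le_antisymm ?_ ?_⟩
  · apply ciSup_le
    intro π
    show (∑ a, π.1 (M.H - r) s a * (M.R s a + ∑ s', M.p s a s' * VrecSft M α π.1 r s'))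
        + α * shannonEntropy (π.1 (M.H - r) s) ≤ _
    obtain ⟨hnn, hsum⟩ := π.2 (M.H - r) s
    have hmono : ∑ a, π.1 (M.H - r) s a * (M.R s a + ∑ s', M.p s a s' * VrecSft M α π.1 r s')
        ≤ ∑ a, π.1 (M.H - r) s a * QQ M α r s a := by
      apply Finset.sum_le_sum; intro a _
      apply mul_le_mul_of_nonneg_left _ (hnn a)
      apply add_le_add_right
      apply Finset.sum_le_sum; intro s' _
      apply mul_le_mul_of_nonneg_left _ (M.p_nonneg s a s')
      exact le_ciSup (vrec_bddAbove M hα r s') π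
    calc (∑ a, π.1 (M.H - r) s a * (M.R s a + ∑ s', M.p s a s' * VrecSft M α π.1 r s'))
          + α * shannonEntropy (π.1 (M.H - r) s)
        ≤ (∑ a, π.1 (M.H - r) s a * QQ M α r s a)
          + α * shannonEntropy (π.1 (M.H - r) s) := by linarith
      _ ≤ _ := gibbs_le hα _ hnn hsum _
  · rw [← part1]
    exact le_ciSup (vrec_bddAbove M hα (r + 1) s) ⟨pistar M α, pistar_isPolicy M α⟩

lemma pistar_opt [Nonempty A] (M : FinMDP S A) {α : ℝ} (hα : 0 < α) :
    ∀ r : ℕ, r ≤ M.H + 1 → ∀ s, VrecSft M α (pistar M α) r s = Vsup M α r s := by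
  intro r
  induction r with
  | zero =>
    intro _ s
    simp only [Vsup, VrecSft]
    exact (ciSup_const).symm
  | succ r ih =>
    intro h s
    obtain ⟨h1, h2⟩ := step_formula M hα r (by omega) (ih (by omega)) s
    rw [h1, h2]

/-- Soft Bellman optimality equation. For α > 0, for every state s and
timestep t ∈ {0,…,H}, V*_sft(s,t) = α·log(Σ_a exp(Q*_sft(s,a,t)/α)). -/
theorem soft_bellman_optimality {S A : Type} [Fintype S] [Nonempty S] [Fintype A] [Nonempty A]
    (M : FinMDP S A) (α : ℝ) (hα : 0 < α) (s : S) (t : ℕ) (ht : t ≤ M.H) :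
    VstarSft M α t s = α * Real.log (∑ a, Real.exp (QstarSft M α t s a / α)) := by
  have hidx : M.H + 1 - t = (M.H - t) + 1 := by omega
  have hVs : VstarSft M α t s = Vsup M α (M.H + 1 - t) s := rfl
  rw [hVs, hidx]
  obtain ⟨_, h2⟩ := step_formula M hα (M.H - t) (by omega)
    (fun s' => pistar_opt M hα (M.H - t) (by omega) s') s
  rw [h2]
  have hq : ∀ a, QstarSft M α t s a = QQ M α (M.H - t) s a := by
    intro a
    have hidx2 : M.H + 1 - (t + 1) = M.H - t := by omega
    simp only [QstarSft, QQ, VstarSft, VpiSft, Vsup, hidx2]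
  simp only [hq]
end

section
/- (Paper's Lemma D.4) Small temperatures preserve strict orderings of optimal Q-values: consider a finite-horizon MDP with |A| ≥ 2, H ≥ 1, and suppose there exist s, t, a, a' with Q*(s,a,t) ≠ Q*(s,a',t); let Δ_M = min over all states s, timesteps t ∈ {0,…,H}, and pairs of actions (a,a') with Q*(s,a,t) ≠ Q*(s,a',t) of |Q*(s,a,t) − Q*(s,a',t)|. If 0 < α < Δ_M / (H·log|A|), then for every t ∈ {0,…,H}, every state s ∈ S, and every pair of actions (a,a') with Q*(s,a,t) ≠ Q*(s,a',t), one has Q*_sft(s,a,t) < Q*_sft(s,a',t) if and only if Q*(s,a,t) < Q*(s,a',t). -/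
open Finset

variable {S A : Type} [Fintype S] [Fintype A]

section AuxSTPO

variable {S A : Type} [Fintype S] [Fintype A]

lemma wsum_le_STPO {w f : A → ℝ} (h0 : ∀ a, 0 ≤ w a) (h1 : ∑ a, w a = 1) {c : ℝ}
    (hf : ∀ a, f a ≤ c) : ∑ a, w a * f a ≤ c := by
  calc ∑ a, w a * f a ≤ ∑ a, w a * c :=
        Finset.sum_le_sum fun a _ => mul_le_mul_of_nonneg_left (hf a) (h0 a)
    _ = c := by rw [← Finset.sum_mul, h1, one_mul]

lemma wsum_nonneg_STPO {w f : A → ℝ} (h0 : ∀ a, 0 ≤ w a) (hf : ∀ a, 0 ≤ f a) :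
    0 ≤ ∑ a, w a * f a :=
  Finset.sum_nonneg fun a _ => mul_nonneg (h0 a) (hf a)

lemma entropy_nonneg_STPO (ρ : A → ℝ) (h0 : ∀ a, 0 ≤ ρ a) (h1 : ∑ a, ρ a = 1) :
    0 ≤ shannonEntropy ρ := by
  rw [shannonEntropy, neg_nonneg]
  refine Finset.sum_nonpos fun a _ => Real.mul_log_nonpos (h0 a) ?_
  calc ρ a ≤ ∑ b, ρ b := Finset.single_le_sum (fun b _ => h0 b) (Finset.mem_univ a)
    _ = 1 := h1

lemma entropy_le_STPO [Nonempty A] (ρ : A → ℝ) (h0 : ∀ a, 0 ≤ ρ a) (h1 : ∑ a, ρ a = 1) :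
    shannonEntropy ρ ≤ Real.log (Fintype.card A) := by
  set n : ℝ := (Fintype.card A : ℝ) with hn'
  have hn : 0 < n := by
    rw [hn']
    exact_mod_cast Fintype.card_pos (α := A)
  have key : ∀ a, -(ρ a * Real.log (ρ a)) ≤ 1 / n - ρ a + ρ a * Real.log n := by
    intro a
    rcases eq_or_lt_of_le (h0 a) with h | h
    · rw [← h]
      simp
      positivity
    · have hlog : Real.log (1 / (ρ a * n)) ≤ 1 / (ρ a * n) - 1 :=
        Real.log_le_sub_one_of_pos (by positivity)
      have hl2 : Real.log (1 / (ρ a * n)) = -(Real.log (ρ a) + Real.log n) := by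
        rw [one_div, Real.log_inv, Real.log_mul h.ne' hn.ne']
      have h2 : ρ a * Real.log (1 / (ρ a * n)) ≤ ρ a * (1 / (ρ a * n) - 1) :=
        mul_le_mul_of_nonneg_left hlog h.le
      have h3 : ρ a * (1 / (ρ a * n)) = 1 / n := by field_simp
      rw [hl2] at h2
      nlinarith [h2, h3]
  calc shannonEntropy ρ = ∑ a, -(ρ a * Real.log (ρ a)) := by
        rw [shannonEntropy]; rw [← Finset.sum_neg_distrib]
    _ ≤ ∑ a, (1 / n - ρ a + ρ a * Real.log n) := Finset.sum_le_sum fun a _ => key a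
    _ = (Fintype.card A : ℝ) * (1 / n) - 1 + Real.log n := by
        rw [Finset.sum_add_distrib, Finset.sum_sub_distrib, ← Finset.sum_mul, h1,
          Finset.sum_const, Finset.card_univ, nsmul_eq_mul, one_mul]
    _ = Real.log n := by field_simp; rw [hn']; ring
    _ = Real.log (Fintype.card A) := rfl

variable (M : FinMDP S A) {π : ℕ → S → A → ℝ} (hπ : IsPolicy π)

set_option linter.unusedSectionVars false

include hπ

lemma hrec_nonneg_STPO (r : ℕ) (s : S) : 0 ≤ hrec M π r s := by
  induction r generalizing s with
  | zero => simp [hrec]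
  | succ r ih =>
    rw [hrec]
    have h1 := (hπ (M.H - r) s).1
    have h2 := (hπ (M.H - r) s).2
    have := entropy_nonneg_STPO (π (M.H - r) s) h1 h2
    have hsum : 0 ≤ ∑ a, π (M.H - r) s a * ∑ s', M.p s a s' * hrec M π r s' :=
      wsum_nonneg_STPO h1 fun a =>
        wsum_nonneg_STPO (M.p_nonneg s a) fun s' => ih s'
    linarith

lemma hrec_le_STPO [Nonempty A] (r : ℕ) (s : S) :
    hrec M π r s ≤ r * Real.log (Fintype.card A) := by
  induction r generalizing s with
  | zero => simp [hrec]
  | succ r ih =>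
    rw [hrec]
    have h1 := (hπ (M.H - r) s).1
    have h2 := (hπ (M.H - r) s).2
    have hent := entropy_le_STPO (π (M.H - r) s) h1 h2
    have hsum : (∑ a, π (M.H - r) s a * ∑ s', M.p s a s' * hrec M π r s')
        ≤ r * Real.log (Fintype.card A) :=
      wsum_le_STPO h1 h2 fun a =>
        wsum_le_STPO (M.p_nonneg s a) (M.p_sum s a) fun s' => ih s'
    push_cast
    linarith

lemma vrecSft_eq_STPO (α : ℝ) (r : ℕ) (s : S) :
    VrecSft M α π r s = Vrec M π r s + α * hrec M π r s := by
  induction r generalizing s with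
  | zero => simp [VrecSft, Vrec, hrec]
  | succ r ih =>
    rw [VrecSft, Vrec, hrec]
    have key : ∀ a, (M.R s a + ∑ s', M.p s a s' * VrecSft M α π r s')
        = (M.R s a + ∑ s', M.p s a s' * Vrec M π r s')
          + α * ∑ s', M.p s a s' * hrec M π r s' := by
      intro a
      rw [Finset.mul_sum]
      rw [show (∑ s', M.p s a s' * VrecSft M α π r s')
          = ∑ s', (M.p s a s' * Vrec M π r s' + α * (M.p s a s' * hrec M π r s')) from
        Finset.sum_congr rfl fun s' _ => by rw [ih]; ring]
      rw [Finset.sum_add_distrib]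
      ring
    have h2 : (∑ a, π (M.H - r) s a * (M.R s a + ∑ s', M.p s a s' * VrecSft M α π r s'))
        = (∑ a, π (M.H - r) s a * (M.R s a + ∑ s', M.p s a s' * Vrec M π r s'))
          + α * ∑ a, π (M.H - r) s a * ∑ s', M.p s a s' * hrec M π r s' := by
      rw [Finset.mul_sum, ← Finset.sum_add_distrib]
      refine Finset.sum_congr rfl fun a _ => ?_
      rw [key a]
      ring
    rw [h2]
    ring

lemma vrec_le_STPO {C : ℝ} (hC : ∀ s a, M.R s a ≤ C) (hC0 : 0 ≤ C) (r : ℕ) (s : S) :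
    Vrec M π r s ≤ r * C := by
  induction r generalizing s with
  | zero => simp [Vrec]
  | succ r ih =>
    rw [Vrec]
    have h1 := (hπ (M.H - r) s).1
    have h2 := (hπ (M.H - r) s).2
    have : (∑ a, π (M.H - r) s a * (M.R s a + ∑ s', M.p s a s' * Vrec M π r s'))
        ≤ C + r * C := by
      refine wsum_le_STPO h1 h2 fun a => ?_
      have : (∑ s', M.p s a s' * Vrec M π r s') ≤ r * C :=
        wsum_le_STPO (M.p_nonneg s a) (M.p_sum s a) fun s' => ih s'
      linarith [hC s a]
    push_cast
    linarith

end AuxSTPO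

/-- Uniform policy, used to show the policy type is nonempty. -/
noncomputable instance instNonemptyPolicy {S A : Type} [Fintype S] [Fintype A] [Nonempty A] :
    Nonempty {π : ℕ → S → A → ℝ // IsPolicy π} := by
  refine ⟨⟨fun _ _ _ => (Fintype.card A : ℝ)⁻¹, fun t s => ⟨fun a => by positivity, ?_⟩⟩⟩
  have h : (Fintype.card A : ℝ) ≠ 0 := by
    have := Fintype.card_pos (α := A); positivity
  simp [Finset.sum_const, Finset.card_univ, h]

section MainSTPO

variable {S A : Type} [Fintype S] [Nonempty S] [Fintype A] [Nonempty A]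

lemma exists_R_bound_STPO (M : FinMDP S A) : ∃ C : ℝ, 0 ≤ C ∧ ∀ s a, M.R s a ≤ C := by
  obtain ⟨C₀, hC₀⟩ := Finset.exists_le (Finset.univ.image fun p : S × A => M.R p.1 p.2)
  refine ⟨max C₀ 0, le_max_right _ _, fun s a => ?_⟩
  exact le_trans (hC₀ _ (Finset.mem_image_of_mem _ (Finset.mem_univ (s, a)))) (le_max_left _ _)

lemma bddAbove_Vpi_STPO (M : FinMDP S A) (t : ℕ) (s : S) :
    BddAbove (Set.range fun π : {π : ℕ → S → A → ℝ // IsPolicy π} => Vpi M π.1 t s) := by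
  obtain ⟨C, hC0, hC⟩ := exists_R_bound_STPO M
  refine ⟨(M.H + 1 - t : ℕ) * C, ?_⟩
  rintro x ⟨π, rfl⟩
  exact vrec_le_STPO M π.2 hC hC0 _ s

lemma bddAbove_VpiSft_STPO (M : FinMDP S A) (α : ℝ) (hα0 : 0 ≤ α) (t : ℕ) (s : S) :
    BddAbove (Set.range fun π : {π : ℕ → S → A → ℝ // IsPolicy π} => VpiSft M α π.1 t s) := by
  obtain ⟨C, hC0, hC⟩ := exists_R_bound_STPO M
  refine ⟨(M.H + 1 - t : ℕ) * C + α * ((M.H + 1 - t : ℕ) * Real.log (Fintype.card A)), ?_⟩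
  rintro x ⟨π, rfl⟩
  have h1 : VpiSft M α π.1 t s = Vrec M π.1 (M.H + 1 - t) s + α * hrec M π.1 (M.H + 1 - t) s :=
    vrecSft_eq_STPO M π.2 α _ s
  have h2 := vrec_le_STPO M π.2 hC hC0 (M.H + 1 - t) s
  have h3 := hrec_le_STPO M π.2 (M.H + 1 - t) s
  have h4 := mul_le_mul_of_nonneg_left h3 hα0
  dsimp only
  rw [h1]
  linarith

lemma vstar_le_vstarSft_STPO (M : FinMDP S A) (α : ℝ) (hα0 : 0 ≤ α) (t : ℕ) (s : S) :
    Vstar M t s ≤ VstarSft M α t s := by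
  refine ciSup_mono (bddAbove_VpiSft_STPO M α hα0 t s) fun π => ?_
  have h1 : VpiSft M α π.1 t s = Vrec M π.1 (M.H + 1 - t) s + α * hrec M π.1 (M.H + 1 - t) s :=
    vrecSft_eq_STPO M π.2 α _ s
  have h2 := hrec_nonneg_STPO M π.2 (M.H + 1 - t) s
  have := mul_nonneg hα0 h2
  rw [Vpi] at *
  rw [h1]
  linarith

lemma vstarSft_le_STPO (M : FinMDP S A) (α : ℝ) (hα0 : 0 ≤ α) (t : ℕ) (s : S) :
    VstarSft M α t s ≤ Vstar M t s + α * ((M.H + 1 - t : ℕ) * Real.log (Fintype.card A)) := by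
  refine ciSup_le fun π => ?_
  have h1 : VpiSft M α π.1 t s = Vrec M π.1 (M.H + 1 - t) s + α * hrec M π.1 (M.H + 1 - t) s :=
    vrecSft_eq_STPO M π.2 α _ s
  have h3 := hrec_le_STPO M π.2 (M.H + 1 - t) s
  have h4 := mul_le_mul_of_nonneg_left h3 hα0
  have h5 : Vpi M π.1 t s ≤ Vstar M t s := le_ciSup (bddAbove_Vpi_STPO M t s) π
  rw [Vpi] at h5
  rw [h1]
  linarith

end MainSTPO

/-- paper's Lemma D.4: small temperatures preserve strict orderings of
optimal Q-values. With Δ_M the minimum nonzero gap between optimal Q-values, if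
0 < α < Δ_M/(H·log|A|), then for all s, t ≤ H and actions a, a' with
Q*(s,a,t) ≠ Q*(s,a',t): Q*_sft(s,a,t) < Q*_sft(s,a',t) ↔ Q*(s,a,t) < Q*(s,a',t). -/
theorem small_temperature_preserves_order {S A : Type}
    [Fintype S] [Nonempty S] [Fintype A] [Nonempty A]
    (M : FinMDP S A) (hA : 2 ≤ Fintype.card A) (hH : 1 ≤ M.H)
    (hex : ∃ (s : S) (t : ℕ) (a a' : A), t ≤ M.H ∧ Qstar M t s a ≠ Qstar M t s a')
    (Δ : ℝ)
    (hΔ : Δ = sInf {d : ℝ | ∃ (s : S) (t : ℕ) (a a' : A),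
      t ≤ M.H ∧ Qstar M t s a ≠ Qstar M t s a' ∧ d = |Qstar M t s a - Qstar M t s a'|})
    (α : ℝ) (hα0 : 0 < α) (hα : α < Δ / ((M.H : ℝ) * Real.log (Fintype.card A)))
    (t : ℕ) (ht : t ≤ M.H) (s : S) (a a' : A) (hne : Qstar M t s a ≠ Qstar M t s a') :
    QstarSft M α t s a < QstarSft M α t s a' ↔ Qstar M t s a < Qstar M t s a' := by
  set L := Real.log (Fintype.card A) with hL'
  have hL : 0 < L := Real.log_pos (by exact_mod_cast hA)
  have hHL : 0 < (M.H : ℝ) * L := by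
    have : (1 : ℝ) ≤ (M.H : ℝ) := by exact_mod_cast hH
    nlinarith
  -- bound on the perturbation of each Q-value
  set B : ℝ := α * ((M.H : ℝ) * L) with hB'
  have hqb : ∀ b : A, 0 ≤ QstarSft M α t s b - Qstar M t s b ∧
      QstarSft M α t s b - Qstar M t s b ≤ B := by
    intro b
    have hdiff : QstarSft M α t s b - Qstar M t s b
        = ∑ s', M.p s b s' * (VstarSft M α (t + 1) s' - Vstar M (t + 1) s') := by
      rw [QstarSft, Qstar]
      rw [Finset.sum_congr rfl fun s' _ => (mul_sub (M.p s b s') _ _)]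
      rw [Finset.sum_sub_distrib]
      ring
    constructor
    · rw [hdiff]
      exact wsum_nonneg_STPO (M.p_nonneg s b) fun s' =>
        sub_nonneg.mpr (vstar_le_vstarSft_STPO M α hα0.le (t + 1) s')
    · rw [hdiff]
      refine wsum_le_STPO (M.p_nonneg s b) (M.p_sum s b) fun s' => ?_
      have h1 := vstarSft_le_STPO M α hα0.le (t + 1) s'
      have h2 : ((M.H + 1 - (t + 1) : ℕ) : ℝ) ≤ (M.H : ℝ) := by
        have : M.H + 1 - (t + 1) ≤ M.H := by omega
        exact_mod_cast this
      have h3 : α * (((M.H + 1 - (t + 1) : ℕ) : ℝ) * L) ≤ B := by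
        rw [hB']
        have := mul_le_mul_of_nonneg_right h2 hL.le
        nlinarith
      linarith
  have hBΔ : B < Δ := by
    rw [hB']
    exact (lt_div_iff₀ hHL).mp hα
  have hΔle : Δ ≤ |Qstar M t s a - Qstar M t s a'| := by
    rw [hΔ]
    refine csInf_le ⟨0, ?_⟩ ⟨s, t, a, a', ht, hne, rfl⟩
    rintro d ⟨s₁, t₁, a₁, a₁', _, _, rfl⟩
    exact abs_nonneg _
  obtain ⟨h0a, h1a⟩ := hqb a
  obtain ⟨h0a', h1a'⟩ := hqb a'
  constructor
  · intro hsoft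
    by_contra hnot
    have hlt : Qstar M t s a' < Qstar M t s a := lt_of_le_of_ne (not_lt.mp hnot) (Ne.symm hne)
    have habs : |Qstar M t s a - Qstar M t s a'| = Qstar M t s a - Qstar M t s a' := by
      rw [abs_of_pos]; linarith
    rw [habs] at hΔle
    linarith
  · intro hlt
    have habs : |Qstar M t s a - Qstar M t s a'| = Qstar M t s a' - Qstar M t s a := by
      rw [abs_of_neg]; ring_nf; linarith
    rw [habs] at hΔle
    linarith
end

section
/- Simple regret is controlled by immediate simple regrets over the remaining horizon (deterministic core of the paper's Lemma D.5): for a finite-horizon MDP and any policy ψ, for every state s and timestep t ∈ {0,…,H}, reg(s,t,ψ) ≤ Σ_{i=t}^{H} max_{s'∈S} reg_I(s',i,ψ). -/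
open Finset

variable {S A : Type} [Fintype S] [Fintype A]

/-!
Subtracting the Bellman equation of `ψ` from the definition of `Q*` gives the one-step
decomposition `reg(s,t) = reg_I(s,t) + E_{a ~ ψ, s' ~ p}[reg(s',t+1)]`. Since `ψ` and `p` are
probability distributions, the expectation is at most `max_{s'} reg(s',t+1)`, and backward
induction from `reg(·,H+1) = 0` accumulates the maxima of the immediate regrets.
-/

theorem sum_mul_le_of_forall_le {ι : Type*} [Fintype ι] {w f : ι → ℝ} {B : ℝ}
    (hw : ∀ i, 0 ≤ w i) (hw₁ : ∑ i, w i = 1) (hf : ∀ i, f i ≤ B) :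
    ∑ i, w i * f i ≤ B :=
  calc ∑ i, w i * f i ≤ ∑ i, w i * B :=
        sum_le_sum fun i _ => mul_le_mul_of_nonneg_left (hf i) (hw i)
    _ = B := by rw [← sum_mul, hw₁, one_mul]

namespace FinMDP

variable (M : FinMDP S A) (π : ℕ → S → A → ℝ)

theorem Vpi_eq_zero_of_lt {t : ℕ} (ht : M.H < t) (s : S) : Vpi M π t s = 0 := by
  rw [Vpi, Nat.sub_eq_zero_of_le ht, Vrec]

theorem Vstar_eq_zero_of_lt {t : ℕ} (ht : M.H < t) (s : S) : Vstar M t s = 0 := by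
  simp only [Vstar, Vpi_eq_zero_of_lt M _ ht, Real.iSup_const_zero]

theorem reg_eq_zero_of_lt {t : ℕ} (ht : M.H < t) (s : S) : reg M π t s = 0 := by
  rw [reg, Vstar_eq_zero_of_lt M ht, Vpi_eq_zero_of_lt M π ht, sub_zero]

theorem Vpi_eq_sum_mul_Qpi {t : ℕ} (ht : t ≤ M.H) (s : S) :
    Vpi M π t s = ∑ a, π t s a * Qpi M π t s a := by
  obtain ⟨r, hr⟩ : ∃ r, M.H + 1 - t = r + 1 := ⟨M.H - t, by omega⟩
  have hH : M.H - r = t := by omega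
  have hnext : M.H + 1 - (t + 1) = r := by omega
  rw [Vpi, hr, Vrec, hH]
  simp only [Qpi, Vpi, hnext]

theorem Qstar_sub_Qpi (t : ℕ) (s : S) (a : A) :
    Qstar M t s a - Qpi M π t s a = ∑ s', M.p s a s' * reg M π (t + 1) s' := by
  simp only [Qstar, Qpi, reg, mul_sub, sum_sub_distrib, add_sub_add_left_eq_sub]

theorem reg_eq_regI_add {t : ℕ} (ht : t ≤ M.H) (s : S) :
    reg M π t s = regI M π t s + ∑ a, π t s a * ∑ s', M.p s a s' * reg M π (t + 1) s' := by
  simp_rw [← Qstar_sub_Qpi, mul_sub, sum_sub_distrib]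
  rw [reg, regI, Vpi_eq_sum_mul_Qpi M π ht]
  ring

end FinMDP

theorem simple_regret_le_sum_immediate_general {S A : Type}
    [Fintype S] [Fintype A]
    (M : FinMDP S A) (ψ : ℕ → S → A → ℝ) (hψ : IsPolicy ψ)
    (s : S) (t : ℕ) :
    reg M ψ t s ≤ ∑ i ∈ Finset.Icc t M.H, ⨆ s' : S, regI M ψ i s' := by
  obtain ⟨k, hk⟩ : ∃ k, M.H + 1 - t = k := ⟨_, rfl⟩
  induction k generalizing t s with
  | zero =>
    have ht : M.H < t := by omega
    rw [M.reg_eq_zero_of_lt ψ ht, Icc_eq_empty_of_lt ht, sum_empty]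
  | succ k ih =>
    have ht : t ≤ M.H := by omega
    have hnext : ∀ s', reg M ψ (t + 1) s' ≤ ∑ i ∈ Ioc t M.H, ⨆ u : S, regI M ψ i u :=
      fun s' => Icc_add_one_left_eq_Ioc t M.H ▸ ih s' (t + 1) (by omega)
    rw [M.reg_eq_regI_add ψ ht, ← add_sum_Ioc_eq_sum_Icc ht]
    gcongr
    · exact le_ciSup (Set.finite_range _).bddAbove s
    · exact sum_mul_le_of_forall_le (hψ t s).1 (hψ t s).2 fun a =>
        sum_mul_le_of_forall_le (M.p_nonneg s a) (M.p_sum s a) hnext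

/-- simple regret is controlled by immediate simple regrets over the
remaining horizon: for any policy ψ, state s and timestep t ∈ {0,…,H},
`reg(s,t,ψ) ≤ Σ_{i=t}^{H} max_{s'∈S} reg_I(s',i,ψ)`. -/
theorem simple_regret_le_sum_immediate {S A : Type}
    [Fintype S] [Nonempty S] [Fintype A] [Nonempty A]
    (M : FinMDP S A) (ψ : ℕ → S → A → ℝ) (hψ : IsPolicy ψ)
    (s : S) (t : ℕ) (ht : t ≤ M.H) :
    reg M ψ t s ≤ ∑ i ∈ Finset.Icc t M.H, ⨆ s' : S, regI M ψ i s' :=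
  simple_regret_le_sum_immediate_general M ψ hψ s t
end

section
/- (Paper's Corollary D.7, stated for an empirical distribution) Concentration of the empirical probability mass function: Let S be a finite nonempty set, let p be a probability distribution on S, and let X_1, …, X_m be i.i.d. random variables each distributed according to p. For s ∈ S let p̂(s) = (1/m)·Σ_{i=1}^m 𝟙[X_i = s] be the empirical frequency of s. Then for every ε > 0, P( max_{s∈S} |p̂(s) − p(s)| > ε ) ≤ 2·exp(−ε²·m/2). -/
open MeasureTheory Finset

namespace EmpAux

open Real

/-- Key analytic inequality behind Hoeffding's lemma. -/
lemma key_ineq {u h : ℝ} (hu0 : 0 ≤ u) (hu1 : u ≤ 1) (hh : 0 ≤ h) :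
    Real.exp (-u*h) * ((1-u) + u * Real.exp h) ≤ Real.exp (h^2/8) := by
  set den : ℝ → ℝ := fun x => (1-u) + u * Real.exp x with hden_def
  have hden : ∀ x, 0 < den x := by
    intro x
    rcases eq_or_lt_of_le hu0 with h0 | h0
    · simp [hden_def, ← h0]
    · have : 0 < u * Real.exp x := mul_pos h0 (Real.exp_pos x)
      have : (0:ℝ) ≤ 1 - u := by linarith
      simp only [hden_def]; nlinarith
  have hden' : ∀ x, HasDerivAt den (u * Real.exp x) x := by
    intro x
    exact ((Real.hasDerivAt_exp x).const_mul u).const_add (1-u)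
  set v : ℝ → ℝ := fun x => u * Real.exp x / den x with hv_def
  have hv' : ∀ x, HasDerivAt v (v x - v x * v x) x := by
    intro x
    have h1 : HasDerivAt (fun x => u * Real.exp x) (u * Real.exp x) x :=
      (Real.hasDerivAt_exp x).const_mul u
    have h2 := h1.div (hden' x) (ne_of_gt (hden x))
    have h3 : (u * Real.exp x * den x - u * Real.exp x * (u * Real.exp x)) / den x ^ 2
        = v x - v x * v x := by
      have hd : den x ≠ 0 := (hden x).ne'
      simp only [hv_def]
      field_simp
    exact h3 ▸ h2
  -- ψ x = x/4 + u - v x is monotone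
  have hψmono : Monotone (fun x => x/4 + u - v x) := by
    apply monotone_of_hasDerivAt_nonneg (f' := fun x => 1/4 - (v x - v x * v x))
    · intro x
      exact ((hasDerivAt_id x).div_const 4 |>.add_const u).sub (hv' x)
    · intro x
      have : (0:ℝ) ≤ (v x - 1/2)^2 := sq_nonneg _
      simp only [Pi.zero_apply]
      nlinarith
  have hv0 : v 0 = u := by
    simp [hv_def, hden_def]
  have hvle : ∀ x, 0 ≤ x → v x ≤ x/4 + u := by
    intro x hx
    have h2 : (0:ℝ)/4 + u - v 0 ≤ x/4 + u - v x := hψmono hx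
    rw [hv0] at h2
    linarith
  -- φ x = x^2/8 + u*x - log (den x) is monotone on [0,∞)
  set φ : ℝ → ℝ := fun x => x^2/8 + u*x - Real.log (den x) with hφ_def
  have hφ' : ∀ x, HasDerivAt φ (x/4 + u - v x) x := by
    intro x
    have h1 : HasDerivAt (fun x : ℝ => x^2/8 + u*x) (x/4 + u) x := by
      have := ((hasDerivAt_pow 2 x).div_const 8).add ((hasDerivAt_id x).const_mul u)
      refine this.congr_deriv ?_
      ring
    have h2 : HasDerivAt (fun x => Real.log (den x)) (u * Real.exp x / den x) x :=
      (hden' x).log (ne_of_gt (hden x))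
    exact h1.sub h2
  have hφdiff : Differentiable ℝ φ := fun x => (hφ' x).differentiableAt
  have hφmono : MonotoneOn φ (Set.Ici (0:ℝ)) := by
    apply monotoneOn_of_deriv_nonneg (convex_Ici 0) hφdiff.continuous.continuousOn
      hφdiff.differentiableOn
    intro x hx
    rw [interior_Ici] at hx
    rw [(hφ' x).deriv]
    have := hvle x (le_of_lt hx)
    linarith
  have hφ0 : φ 0 = 0 := by simp [hφ_def, hden_def]
  have hφh : 0 ≤ φ h := by
    have := hφmono (Set.self_mem_Ici) (Set.mem_Ici.2 hh) hh
    rwa [hφ0] at this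
  have hlog : Real.log (den h) ≤ h^2/8 + u*h := by
    simp only [hφ_def] at hφh; linarith
  have hden_le : den h ≤ Real.exp (h^2/8 + u*h) := by
    rw [← Real.exp_log (hden h)]
    exact Real.exp_le_exp.2 hlog
  calc Real.exp (-u*h) * ((1-u) + u * Real.exp h)
      ≤ Real.exp (-u*h) * Real.exp (h^2/8 + u*h) := by
        exact mul_le_mul_of_nonneg_left hden_le (le_of_lt (Real.exp_pos _))
    _ = Real.exp (h^2/8) := by rw [← Real.exp_add]; ring_nf


/-- Hoeffding's lemma, finite form. -/
lemma hoeffding_fin {S : Type} [Fintype S] (p : S → ℝ) (hp0 : ∀ s, 0 ≤ p s)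
    (hp1 : ∑ s, p s = 1) (g : S → ℝ) (a c t : ℝ) (hc : 0 ≤ c) (ht : 0 ≤ t)
    (hga : ∀ s, a ≤ g s) (hgb : ∀ s, g s ≤ a + c) (hmean : ∑ s, p s * g s = 0) :
    ∑ s, p s * Real.exp (t * g s) ≤ Real.exp (t^2 * c^2 / 8) := by
  have ha : a ≤ 0 := by
    have h1 : ∑ s, p s * a ≤ ∑ s, p s * g s :=
      Finset.sum_le_sum (fun s _ => mul_le_mul_of_nonneg_left (hga s) (hp0 s))
    rw [hmean, ← Finset.sum_mul, hp1, one_mul] at h1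
    exact h1
  have hac : 0 ≤ a + c := by
    have h1 : ∑ s, p s * g s ≤ ∑ s, p s * (a + c) :=
      Finset.sum_le_sum (fun s _ => mul_le_mul_of_nonneg_left (hgb s) (hp0 s))
    rw [hmean, ← Finset.sum_mul, hp1, one_mul] at h1
    exact h1
  rcases eq_or_lt_of_le hc with hc0 | hc0
  · -- c = 0
    have ha0 : a = 0 := le_antisymm ha (by linarith)
    have hg0 : ∀ s, g s = 0 := fun s => le_antisymm (by have := hgb s; rw [ha0, ← hc0] at this; simpa using this) (ha0 ▸ hga s)
    simp only [hg0, mul_zero, Real.exp_zero, mul_one, hp1]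
    exact Real.one_le_exp (by positivity)
  · set u : ℝ := -a/c with hu_def
    have hu0 : 0 ≤ u := div_nonneg (by linarith) hc0.le
    have hu1 : u ≤ 1 := by rw [div_le_one hc0]; linarith
    have hptwise : ∀ s, Real.exp (t * g s) ≤
        ((a + c - g s)/c) * Real.exp (t*a) + ((g s - a)/c) * Real.exp (t*(a+c)) := by
      intro s
      have hl1 : (0:ℝ) ≤ (a + c - g s)/c := div_nonneg (by have := hgb s; linarith) hc0.le
      have hl2 : (0:ℝ) ≤ (g s - a)/c := div_nonneg (by have := hga s; linarith) hc0.le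
      have hl3 : (a + c - g s)/c + (g s - a)/c = 1 := by field_simp; ring
      have := convexOn_exp.2 (Set.mem_univ (t*a)) (Set.mem_univ (t*(a+c))) hl1 hl2 hl3
      simp only [smul_eq_mul] at this
      have harg : (a + c - g s)/c * (t*a) + (g s - a)/c * (t*(a+c)) = t * g s := by
        field_simp
        ring
      rwa [harg] at this
    have hc0' : c ≠ 0 := hc0.ne'
    have hsum1 : ∑ s, p s * ((a + c - g s)/c) = 1 - u := by
      simp only [← mul_div_assoc]
      rw [← Finset.sum_div]
      have he : ∑ s, p s * (a + c - g s) = a + c := by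
        simp only [mul_sub]
        rw [Finset.sum_sub_distrib, hmean, sub_zero, ← Finset.sum_mul, hp1, one_mul]
      rw [he, hu_def]
      field_simp
      ring
    have hsum2 : ∑ s, p s * ((g s - a)/c) = u := by
      simp only [← mul_div_assoc]
      rw [← Finset.sum_div]
      have he : ∑ s, p s * (g s - a) = -a := by
        simp only [mul_sub]
        rw [Finset.sum_sub_distrib, hmean, ← Finset.sum_mul, hp1]
        ring
      rw [he, hu_def]
    calc ∑ s, p s * Real.exp (t * g s)
        ≤ ∑ s, p s * (((a + c - g s)/c) * Real.exp (t*a) + ((g s - a)/c) * Real.exp (t*(a+c))) :=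
          Finset.sum_le_sum (fun s _ => mul_le_mul_of_nonneg_left (hptwise s) (hp0 s))
      _ = (1-u) * Real.exp (t*a) + u * Real.exp (t*(a+c)) := by
          simp only [mul_add, ← mul_assoc]
          rw [Finset.sum_add_distrib, ← Finset.sum_mul, ← Finset.sum_mul, hsum1, hsum2]
      _ = Real.exp (-u*(t*c)) * ((1-u) + u * Real.exp (t*c)) := by
          have hta : t*a = -u*(t*c) := by rw [hu_def]; field_simp
          have htac : t*(a+c) = -u*(t*c) + t*c := by rw [hu_def]; field_simp
          rw [hta, htac, Real.exp_add]
          ring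
      _ ≤ Real.exp ((t*c)^2/8) := key_ineq hu0 hu1 (mul_nonneg ht hc)
      _ = Real.exp (t^2 * c^2 / 8) := by rw [mul_pow]


section
variable {S : Type} [Fintype S]

/-- Expectation w.r.t. the product of `n` copies of the weight `p`. -/
def Ex (p : S → ℝ) (n : ℕ) (f : (Fin n → S) → ℝ) : ℝ :=
  ∑ x : Fin n → S, (∏ i, p (x i)) * f x

lemma Ex_succ (p : S → ℝ) (n : ℕ) (f : (Fin (n+1) → S) → ℝ) :
    Ex p (n+1) f = ∑ s, p s * Ex p n (fun x => f (Fin.cons s x)) := by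
  rw [Ex, ← Equiv.sum_comp (Fin.consEquiv (fun _ => S)) _, Fintype.sum_prod_type]
  refine Finset.sum_congr rfl (fun s _ => ?_)
  rw [Ex, Finset.mul_sum]
  refine Finset.sum_congr rfl (fun y _ => ?_)
  have h1 : (Fin.consEquiv (fun _ => S)) (s, y) = Fin.cons s y := rfl
  rw [h1, Fin.prod_univ_succ]
  simp [Fin.cons_zero, Fin.cons_succ]
  ring

lemma Ex_swap (p : S → ℝ) (n : ℕ) (F : S → (Fin n → S) → ℝ) :
    Ex p n (fun y => ∑ s, p s * F s y) = ∑ s, p s * Ex p n (F s) := by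
  rw [Ex]
  simp only [Finset.mul_sum, Ex]
  rw [Finset.sum_comm]
  refine Finset.sum_congr rfl (fun s _ => ?_)
  refine Finset.sum_congr rfl (fun y _ => ?_)
  ring

/-- McDiarmid MGF bound, by induction on the number of coordinates. -/
lemma mcdiarmid_mgf [Nonempty S] (p : S → ℝ) (hp0 : ∀ s, 0 ≤ p s) (hp1 : ∑ s, p s = 1)
    (c t : ℝ) (hc : 0 ≤ c) (ht : 0 ≤ t) (n : ℕ) :
    ∀ f : (Fin n → S) → ℝ,
      (∀ (x y : Fin n → S) (i : Fin n), (∀ k, k ≠ i → x k = y k) → f x - f y ≤ c) →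
      Ex p n (fun x => Real.exp (t * (f x - Ex p n f))) ≤ Real.exp (n * (t^2 * c^2 / 8)) := by
  induction n with
  | zero =>
    intro f _
    have hu : (Finset.univ : Finset (Fin 0 → S)) = {fun i => i.elim0} := by
      apply Finset.eq_singleton_iff_unique_mem.2
      exact ⟨Finset.mem_univ _, fun y _ => funext (fun i => i.elim0)⟩
    simp [Ex, hu]
  | succ n ih =>
    intro f hL
    set g : (Fin n → S) → ℝ := fun y => ∑ s, p s * f (Fin.cons s y) with hg_def
    have hEf : Ex p (n+1) f = Ex p n g := by
      rw [Ex_succ, hg_def, Ex_swap]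
    -- conditional Hoeffding bound
    have key1 : ∀ y : Fin n → S, ∑ s, p s * Real.exp (t * (f (Fin.cons s y) - Ex p (n+1) f))
        ≤ Real.exp (t^2 * c^2 / 8) * Real.exp (t * (g y - Ex p (n+1) f)) := by
      intro y
      have hne : (Finset.univ : Finset S).Nonempty := Finset.univ_nonempty
      obtain ⟨s₀, _, hs₀⟩ := Finset.exists_mem_eq_inf' hne (fun s => f (Fin.cons s y))
      set a : ℝ := Finset.univ.inf' hne (fun s => f (Fin.cons s y)) - g y with ha_def
      have hga : ∀ s, a ≤ f (Fin.cons s y) - g y := fun s =>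
        sub_le_sub_right (Finset.inf'_le _ (Finset.mem_univ s)) _
      have hgb : ∀ s, f (Fin.cons s y) - g y ≤ a + c := by
        intro s
        have hdiff : f (Fin.cons s y) - f (Fin.cons s₀ y) ≤ c := by
          refine hL _ _ 0 (fun k hk => ?_)
          rcases Fin.eq_zero_or_eq_succ k with rfl | ⟨j, rfl⟩
          · exact absurd rfl hk
          · simp [Fin.cons_succ]
        rw [ha_def, hs₀]
        linarith
      have hmean : ∑ s, p s * (f (Fin.cons s y) - g y) = 0 := by
        simp only [mul_sub]
        rw [Finset.sum_sub_distrib, ← Finset.sum_mul, hp1, one_mul]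
        simp only [hg_def]
        exact sub_self _
      have hhoeff := hoeffding_fin p hp0 hp1 (fun s => f (Fin.cons s y) - g y) a c t hc ht
        hga hgb hmean
      calc ∑ s, p s * Real.exp (t * (f (Fin.cons s y) - Ex p (n+1) f))
          = (∑ s, p s * Real.exp (t * (f (Fin.cons s y) - g y))) *
              Real.exp (t * (g y - Ex p (n+1) f)) := by
            rw [Finset.sum_mul]
            refine Finset.sum_congr rfl (fun s _ => ?_)
            rw [mul_assoc, ← Real.exp_add]
            ring_nf
        _ ≤ Real.exp (t^2 * c^2 / 8) * Real.exp (t * (g y - Ex p (n+1) f)) :=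
            mul_le_mul_of_nonneg_right hhoeff (le_of_lt (Real.exp_pos _))
    have hLg : ∀ (y y' : Fin n → S) (i : Fin n), (∀ k, k ≠ i → y k = y' k) → g y - g y' ≤ c := by
      intro y y' i hk
      rw [hg_def]
      simp only
      rw [← Finset.sum_sub_distrib]
      have : ∀ s, p s * f (Fin.cons s y) - p s * f (Fin.cons s y') ≤ p s * c := by
        intro s
        rw [← mul_sub]
        refine mul_le_mul_of_nonneg_left ?_ (hp0 s)
        refine hL _ _ i.succ (fun k hks => ?_)
        rcases Fin.eq_zero_or_eq_succ k with rfl | ⟨j, rfl⟩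
        · simp [Fin.cons_zero]
        · simp only [Fin.cons_succ]
          exact hk j (fun hji => hks (by rw [hji]))
      calc ∑ s, (p s * f (Fin.cons s y) - p s * f (Fin.cons s y')) ≤ ∑ s, p s * c :=
            Finset.sum_le_sum (fun s _ => this s)
        _ = c := by rw [← Finset.sum_mul, hp1, one_mul]
    have hW : ∀ y : Fin n → S, (0:ℝ) ≤ ∏ i, p (y i) :=
      fun y => Finset.prod_nonneg (fun i _ => hp0 (y i))
    calc Ex p (n+1) (fun x => Real.exp (t * (f x - Ex p (n+1) f)))
        = Ex p n (fun y => ∑ s, p s * Real.exp (t * (f (Fin.cons s y) - Ex p (n+1) f))) := by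
          rw [Ex_succ, Ex_swap]
      _ ≤ Ex p n (fun y => Real.exp (t^2 * c^2/8) * Real.exp (t * (g y - Ex p n g))) := by
          refine Finset.sum_le_sum (fun y _ => ?_)
          refine mul_le_mul_of_nonneg_left ?_ (hW y)
          rw [← hEf]
          exact key1 y
      _ = Real.exp (t^2 * c^2/8) * Ex p n (fun y => Real.exp (t * (g y - Ex p n g))) := by
          simp only [Ex]
          rw [Finset.mul_sum]
          refine Finset.sum_congr rfl (fun y _ => ?_)
          ring
      _ ≤ Real.exp (t^2 * c^2/8) * Real.exp (n * (t^2 * c^2/8)) :=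
          mul_le_mul_of_nonneg_left (ih g hLg) (le_of_lt (Real.exp_pos _))
      _ = Real.exp ((n+1 : ℕ) * (t^2 * c^2/8)) := by
          rw [← Real.exp_add]
          push_cast
          ring_nf


end

section
variable {S : Type} [Fintype S] [DecidableEq S]

lemma sum_prod_eq (G : Fin n → S → ℝ) :
    ∑ x : Fin n → S, ∏ i, G i (x i) = ∏ i, ∑ s, G i s := by
  rw [Finset.prod_univ_sum, Fintype.piFinset_univ]

lemma sum_W (p : S → ℝ) (hp1 : ∑ s, p s = 1) (n : ℕ) :
    ∑ x : Fin n → S, ∏ k, p (x k) = 1 := by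
  rw [sum_prod_eq (fun _ s => p s)]
  simp [hp1]

lemma Ex_single (p : S → ℝ) (hp1 : ∑ s, p s = 1) {n : ℕ} (i : Fin n) (gg : S → ℝ) :
    ∑ x : Fin n → S, (∏ k, p (x k)) * gg (x i) = ∑ s, p s * gg s := by
  have h1 : ∀ x : Fin n → S, (∏ k, p (x k)) * gg (x i)
      = ∏ k, (fun k s => if k = i then p s * gg s else p s) k (x k) := by
    intro x
    rw [← Finset.mul_prod_erase Finset.univ
      (fun k => (fun k s => if k = i then p s * gg s else p s) k (x k)) (Finset.mem_univ i)]
    rw [← Finset.mul_prod_erase Finset.univ (fun k => p (x k)) (Finset.mem_univ i)]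
    rw [Finset.prod_congr rfl (fun k hk => if_neg (Finset.ne_of_mem_erase hk))]
    simp
    ring
  rw [Finset.sum_congr rfl (fun x _ => h1 x), sum_prod_eq (fun k s => if k = i then p s * gg s else p s)]
  rw [Finset.prod_eq_single i (fun k _ hki => by simp only [if_neg hki]; exact hp1)
    (fun h => absurd (Finset.mem_univ i) h)]
  simp

lemma Ex_pair (p : S → ℝ) (hp1 : ∑ s, p s = 1) {n : ℕ} (i j : Fin n) (hij : i ≠ j)
    (gg hh : S → ℝ) :
    ∑ x : Fin n → S, (∏ k, p (x k)) * (gg (x i) * hh (x j))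
      = (∑ s, p s * gg s) * (∑ s, p s * hh s) := by
  have hjmem : j ∈ Finset.univ.erase i := Finset.mem_erase.2 ⟨hij.symm, Finset.mem_univ j⟩
  set F : Fin n → S → ℝ := fun k s => if k = i then p s * gg s else if k = j then p s * hh s else p s with hF
  have h1 : ∀ x : Fin n → S, (∏ k, p (x k)) * (gg (x i) * hh (x j)) = ∏ k, F k (x k) := by
    intro x
    rw [← Finset.mul_prod_erase Finset.univ (fun k => F k (x k)) (Finset.mem_univ i),
        ← Finset.mul_prod_erase _ (fun k => F k (x k)) hjmem,
        ← Finset.mul_prod_erase Finset.univ (fun k => p (x k)) (Finset.mem_univ i),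
        ← Finset.mul_prod_erase _ (fun k => p (x k)) hjmem]
    have hFi : F i (x i) = p (x i) * gg (x i) := by simp [hF]
    have hFj : F j (x j) = p (x j) * hh (x j) := by simp [hF, hij.symm]
    have hrest : ∏ k ∈ (Finset.univ.erase i).erase j, F k (x k)
        = ∏ k ∈ (Finset.univ.erase i).erase j, p (x k) := by
      refine Finset.prod_congr rfl (fun k hk => ?_)
      have hkj : k ≠ j := Finset.ne_of_mem_erase hk
      have hki : k ≠ i := Finset.ne_of_mem_erase (Finset.mem_of_mem_erase hk)
      simp [hF, hki, hkj]
    rw [hFi, hFj, hrest]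
    ring
  rw [Finset.sum_congr rfl (fun x _ => h1 x), sum_prod_eq F]
  rw [← Finset.mul_prod_erase Finset.univ (fun k => ∑ s, F k s) (Finset.mem_univ i),
      ← Finset.mul_prod_erase _ (fun k => ∑ s, F k s) hjmem]
  have hFi : ∑ s, F i s = ∑ s, p s * gg s := by simp [hF]
  have hFj : ∑ s, F j s = ∑ s, p s * hh s := by simp [hF, hij.symm]
  have hrest : ∏ k ∈ (Finset.univ.erase i).erase j, (∑ s, F k s) = 1 := by
    refine Finset.prod_eq_one (fun k hk => ?_)
    have hkj : k ≠ j := Finset.ne_of_mem_erase hk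
    have hki : k ≠ i := Finset.ne_of_mem_erase (Finset.mem_of_mem_erase hk)
    simp [hF, hki, hkj, hp1]
  rw [hFi, hFj, hrest]
  ring

/-- Variance bound for the empirical frequency of a single outcome. -/
lemma Ex_phat_sq (p : S → ℝ) (hp0 : ∀ s, 0 ≤ p s) (hp1 : ∑ s, p s = 1)
    (n : ℕ) (hn : 0 < n) (s₀ : S) :
    ∑ x : Fin n → S, (∏ k, p (x k)) *
        ((1/(n:ℝ)) * (∑ i, if x i = s₀ then (1:ℝ) else 0) - p s₀)^2 ≤ p s₀ / n := by
  set q := p s₀ with hq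
  set c : ℝ := 1/(n:ℝ) with hc
  set Y : Fin n → (Fin n → S) → ℝ := fun i x => if x i = s₀ then 1 else 0 with hY
  set gg : S → ℝ := fun s => if s = s₀ then 1 else 0 with hgg
  have hgg_val : ∑ s, p s * gg s = q := by
    simp only [hgg, mul_ite, mul_one, mul_zero]
    rw [Finset.sum_ite_eq' Finset.univ s₀ p]
    simp [hq]
  have hnne : (n:ℝ) ≠ 0 := Nat.cast_ne_zero.2 hn.ne'
  set T : (Fin n → S) → ℝ := fun x => ∑ i, Y i x with hT
  have E1 : ∑ x : Fin n → S, (∏ k, p (x k)) * T x = n * q := by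
    simp only [hT, Finset.mul_sum]
    rw [Finset.sum_comm]
    have : ∀ i : Fin n, ∑ x : Fin n → S, (∏ k, p (x k)) * Y i x = q := by
      intro i
      have := Ex_single p hp1 i gg
      simpa [hY, hgg, hgg_val] using this
    rw [Finset.sum_congr rfl (fun i _ => this i)]
    simp [mul_comm]
  have E2 : ∑ x : Fin n → S, (∏ k, p (x k)) * (T x * T x)
      = n * q + ((n:ℝ)^2 - n) * q^2 := by
    have hTT : ∀ x : Fin n → S, T x * T x = ∑ i, ∑ j, Y i x * Y j x := by
      intro x
      rw [hT]
      rw [Finset.sum_mul_sum]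
    simp only [hTT, Finset.mul_sum]
    rw [Finset.sum_comm]
    have hij : ∀ i : Fin n, ∑ x : Fin n → S, ∑ j, (∏ k, p (x k)) * (Y i x * Y j x)
        = ∑ j, ∑ x : Fin n → S, (∏ k, p (x k)) * (Y i x * Y j x) := fun i => by
      rw [Finset.sum_comm]
    rw [Finset.sum_congr rfl (fun i _ => hij i)]
    have hterm : ∀ i j : Fin n, ∑ x : Fin n → S, (∏ k, p (x k)) * (Y i x * Y j x)
        = if i = j then q else q * q := by
      intro i j
      rcases eq_or_ne i j with rfl | hne
      · rw [if_pos rfl]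
        have hYY : ∀ x : Fin n → S, Y i x * Y i x = Y i x := by
          intro x; simp only [hY]; split <;> simp
        rw [Finset.sum_congr rfl (fun x _ => by rw [hYY x])]
        have := Ex_single p hp1 i gg
        simpa [hY, hgg, hgg_val] using this
      · rw [if_neg hne]
        have := Ex_pair p hp1 i j hne gg gg
        simpa [hY, hgg, hgg_val] using this
    rw [Finset.sum_congr rfl (fun i _ => Finset.sum_congr rfl (fun j _ => hterm i j))]
    have hinner : ∀ i : Fin n, ∑ j, (if i = j then q else q * q) = (q - q*q) + n * (q*q) := by
      intro i
      have : ∀ j : Fin n, (if i = j then q else q*q) = (if i = j then q - q*q else 0) + q*q := by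
        intro j; split <;> ring
      rw [Finset.sum_congr rfl (fun j _ => this j), Finset.sum_add_distrib, Finset.sum_ite_eq]
      simp [Finset.card_univ]
    rw [Finset.sum_congr rfl (fun i _ => hinner i)]
    simp only [Finset.sum_add_distrib, Finset.sum_const, Finset.card_univ, Fintype.card_fin,
      nsmul_eq_mul]
    ring
  have hsumW := sum_W p hp1 n
  have hexpand : ∀ x : Fin n → S, (∏ k, p (x k)) * ((c * T x - q)^2)
      = c^2 * ((∏ k, p (x k)) * (T x * T x)) - (2*c*q) * ((∏ k, p (x k)) * T x)
        + q^2 * (∏ k, p (x k)) := by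
    intro x; ring
  calc ∑ x : Fin n → S, (∏ k, p (x k)) * ((1/(n:ℝ)) * (∑ i, if x i = s₀ then (1:ℝ) else 0) - p s₀)^2
      = ∑ x : Fin n → S, (c^2 * ((∏ k, p (x k)) * (T x * T x))
          - (2*c*q) * ((∏ k, p (x k)) * T x) + q^2 * (∏ k, p (x k))) := by
        refine Finset.sum_congr rfl (fun x _ => ?_)
        exact hexpand x
    _ = c^2 * (n * q + ((n:ℝ)^2 - n) * q^2) - (2*c*q) * (n*q) + q^2 := by
        rw [Finset.sum_add_distrib, Finset.sum_sub_distrib, ← Finset.mul_sum, ← Finset.mul_sum,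
          ← Finset.mul_sum, E1, E2, hsumW, mul_one]
    _ = q/n - q^2/n := by
        rw [hc]
        field_simp
        ring
    _ ≤ q/n := by
        have : (0:ℝ) ≤ q^2/n := by positivity
        linarith


end

theorem core_bound {S : Type} [Fintype S] [DecidableEq S] [Nonempty S]
    (p : S → ℝ) (hp0 : ∀ s, 0 ≤ p s) (hp1 : ∑ s, p s = 1) (m : ℕ) (ε : ℝ) (hε : 0 < ε)
    (A : Finset (Fin m → S))
    (hA : ∀ x ∈ A, ∃ s, ε < |(1 / m : ℝ) * (∑ i, if x i = s then (1:ℝ) else 0) - p s|) :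
    ∑ x ∈ A, ∏ i, p (x i) ≤ 2 * Real.exp (-(ε ^ 2 * m / 2)) := by
  have hW : ∀ x : Fin m → S, (0:ℝ) ≤ ∏ i, p (x i) :=
    fun x => Finset.prod_nonneg (fun i _ => hp0 (x i))
  have hsub : ∑ x ∈ A, ∏ i, p (x i) ≤ 1 := by
    calc ∑ x ∈ A, ∏ i, p (x i) ≤ ∑ x : Fin m → S, ∏ i, p (x i) :=
          Finset.sum_le_sum_of_subset_of_nonneg (Finset.subset_univ A) (fun x _ _ => hW x)
      _ = 1 := sum_W p hp1 m
  by_cases hcase : ε ^ 2 * m / 2 ≤ Real.log 2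
  · have h2 : Real.exp (-Real.log 2) ≤ Real.exp (-(ε^2*m/2)) := Real.exp_le_exp.2 (by linarith)
    have h3 : Real.exp (-Real.log 2) = 1/2 := by
      rw [Real.exp_neg, Real.exp_log two_pos]
      norm_num
    rw [h3] at h2
    linarith
  · push_neg at hcase
    have hm : 0 < m := by
      rcases Nat.eq_zero_or_pos m with rfl | h
      · exfalso
        have := Real.log_pos (by norm_num : (1:ℝ) < 2)
        simp at hcase
        linarith
      · exact h
    have hmR : (0:ℝ) < m := Nat.cast_pos.2 hm
    set phat : (Fin m → S) → S → ℝ :=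
      fun x s => (1 / m : ℝ) * (∑ i, if x i = s then (1:ℝ) else 0) with hphat_def
    have hne : (Finset.univ : Finset S).Nonempty := Finset.univ_nonempty
    set D : (Fin m → S) → ℝ := fun x => Finset.univ.sup' hne (fun s => |phat x s - p s|)
      with hD_def
    have hDx : ∀ x, D x = Finset.univ.sup' hne (fun s => |phat x s - p s|) := fun x => rfl
    have hDge : ∀ x s, |phat x s - p s| ≤ D x := by
      intro x s
      rw [hDx x]
      exact Finset.le_sup' (fun s => |phat x s - p s|) (Finset.mem_univ s)
    have hD0 : ∀ x, 0 ≤ D x := by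
      intro x
      have s1 : S := Classical.arbitrary S
      exact le_trans (abs_nonneg (phat x s1 - p s1)) (hDge x s1)
    have hDle : ∀ x ∈ A, ε < D x := by
      intro x hx
      obtain ⟨s, hs⟩ := hA x hx
      exact lt_of_lt_of_le hs (hDge x s)
    set ED : ℝ := ∑ x : Fin m → S, (∏ i, p (x i)) * D x with hED_def
    -- variance bound
    have hEDsq : ∑ x : Fin m → S, (∏ i, p (x i)) * (D x)^2 ≤ 1/m := by
      have hpt : ∀ x : Fin m → S, (D x)^2 ≤ ∑ s, (phat x s - p s)^2 := by
        intro x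
        obtain ⟨s', _, hs'⟩ := Finset.exists_mem_eq_sup' hne (fun s => |phat x s - p s|)
        rw [hD_def]
        simp only
        rw [hs', sq_abs]
        exact Finset.single_le_sum (fun s _ => sq_nonneg (phat x s - p s)) (Finset.mem_univ s')
      calc ∑ x : Fin m → S, (∏ i, p (x i)) * (D x)^2
          ≤ ∑ x : Fin m → S, (∏ i, p (x i)) * (∑ s, (phat x s - p s)^2) :=
            Finset.sum_le_sum (fun x _ => mul_le_mul_of_nonneg_left (hpt x) (hW x))
        _ = ∑ s, ∑ x : Fin m → S, (∏ i, p (x i)) * (phat x s - p s)^2 := by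
            simp only [Finset.mul_sum]
            rw [Finset.sum_comm]
        _ ≤ ∑ s, p s / m := by
            refine Finset.sum_le_sum (fun s _ => ?_)
            have := Ex_phat_sq p hp0 hp1 m hm s
            simpa [hphat_def] using this
        _ = 1/m := by rw [← Finset.sum_div, hp1]
    -- Cauchy-Schwarz: (E D)^2 ≤ E D^2
    have hED2 : ED^2 ≤ 1/m := by
      have hcs := Finset.sum_sq_le_sum_mul_sum_of_sq_eq_mul (Finset.univ : Finset (Fin m → S))
        (f := fun x => ∏ i, p (x i)) (g := fun x => (∏ i, p (x i)) * (D x)^2)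
        (r := fun x => (∏ i, p (x i)) * D x)
        (fun x _ => hW x) (fun x _ => mul_nonneg (hW x) (sq_nonneg _)) (fun x _ => by ring)
      rw [sum_W p hp1 m, one_mul] at hcs
      exact le_trans hcs hEDsq
    set r : ℝ := Real.sqrt m with hr_def
    have hr : 0 < r := Real.sqrt_pos.2 hmR
    have hr2 : r^2 = m := Real.sq_sqrt hmR.le
    have hED1 : ED ≤ 1/r := by
      have h0 : 0 ≤ ED := Finset.sum_nonneg (fun x _ => mul_nonneg (hW x) (hD0 x))
      calc ED ≤ |ED| := le_abs_self _
        _ = Real.sqrt (ED^2) := (Real.sqrt_sq_eq_abs ED).symm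
        _ ≤ Real.sqrt (1/m) := Real.sqrt_le_sqrt hED2
        _ = 1/r := by rw [one_div, Real.sqrt_inv, hr_def, one_div]
    have hεr : 1/r < ε := by
      have hlog2 : (0.6931471803 : ℝ) < Real.log 2 := Real.log_two_gt_d9
      have h1 : 1 < ε^2 * m := by nlinarith
      have h2 : 1 < (ε*r)^2 := by nlinarith [hr2]
      have h3 : 1 < ε * r := by nlinarith [mul_pos hε hr]
      rw [div_lt_iff₀ hr]
      linarith [mul_comm ε r]
    set ε' : ℝ := ε - 1/r with hε'_def
    have hε' : 0 < ε' := by simp only [hε'_def]; linarith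
    set t : ℝ := 4 * m * ε' with ht_def
    have ht : 0 ≤ t := by positivity
    set c : ℝ := (m:ℝ)⁻¹ with hc_def
    have hc : 0 ≤ c := by positivity
    -- Lipschitz property of D
    have hLD : ∀ (x y : Fin m → S) (i : Fin m), (∀ k, k ≠ i → x k = y k) → D x - D y ≤ c := by
      intro x y i hk
      have hphat_lip : ∀ s, |phat x s - phat y s| ≤ c := by
        intro s
        have hd : ∑ i', ((if x i' = s then (1:ℝ) else 0) - (if y i' = s then (1:ℝ) else 0))
            = (if x i = s then (1:ℝ) else 0) - (if y i = s then (1:ℝ) else 0) := by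
          refine Finset.sum_eq_single i (fun k _ hki => ?_) (fun h => absurd (Finset.mem_univ i) h)
          rw [hk k hki, sub_self]
        have he : phat x s - phat y s = (1/m : ℝ) *
            ((if x i = s then (1:ℝ) else 0) - (if y i = s then (1:ℝ) else 0)) := by
          rw [hphat_def]
          simp only
          rw [← mul_sub, ← Finset.sum_sub_distrib, hd]
        rw [he, abs_mul]
        have h1 : |(1/m : ℝ)| = 1/m := abs_of_nonneg (by positivity)
        have h2 : |(if x i = s then (1:ℝ) else 0) - (if y i = s then (1:ℝ) else 0)| ≤ 1 := by
          split_ifs <;> norm_num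
        rw [h1]
        calc (1/m : ℝ) * |(if x i = s then (1:ℝ) else 0) - (if y i = s then (1:ℝ) else 0)|
            ≤ (1/m : ℝ) * 1 := mul_le_mul_of_nonneg_left h2 (by positivity)
          _ = c := by rw [mul_one, hc_def, one_div]
      obtain ⟨s', _, hs'⟩ := Finset.exists_mem_eq_sup' hne (fun s => |phat x s - p s|)
      have h1 : D x = |phat x s' - p s'| := hs'
      have h2 : |phat y s' - p s'| ≤ D y := hDge y s'
      have h3 : |phat x s' - p s'| ≤ |phat x s' - phat y s'| + |phat y s' - p s'| :=
        abs_sub_le _ _ _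
      have h4 := hphat_lip s'
      rw [h1]
      linarith
    -- Markov / Chernoff step
    have hmc := mcdiarmid_mgf p hp0 hp1 c t hc ht m D hLD
    rw [Ex, Ex] at hmc
    calc ∑ x ∈ A, ∏ i, p (x i)
        ≤ ∑ x ∈ A, (∏ i, p (x i)) * Real.exp (t * (D x - ED - ε')) := by
          refine Finset.sum_le_sum (fun x hx => ?_)
          have h1 : 0 ≤ t * (D x - ED - ε') := by
            refine mul_nonneg ht ?_
            have := hDle x hx
            have : ε' + ED ≤ ε := by simp only [hε'_def]; linarith
            linarith [hDle x hx]
          calc (∏ i, p (x i)) = (∏ i, p (x i)) * 1 := (mul_one _).symm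
            _ ≤ (∏ i, p (x i)) * Real.exp (t * (D x - ED - ε')) :=
              mul_le_mul_of_nonneg_left (Real.one_le_exp h1) (hW x)
      _ ≤ ∑ x : Fin m → S, (∏ i, p (x i)) * Real.exp (t * (D x - ED - ε')) :=
          Finset.sum_le_sum_of_subset_of_nonneg (Finset.subset_univ A)
            (fun x _ _ => mul_nonneg (hW x) (Real.exp_pos _).le)
      _ = Real.exp (-(t*ε')) * ∑ x : Fin m → S, (∏ i, p (x i)) * Real.exp (t * (D x - ED)) := by
          rw [Finset.mul_sum]
          refine Finset.sum_congr rfl (fun x _ => ?_)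
          rw [show t * (D x - ED - ε') = (-(t*ε')) + t * (D x - ED) by ring, Real.exp_add]
          ring
      _ ≤ Real.exp (-(t*ε')) * Real.exp (m * (t^2*c^2/8)) :=
          mul_le_mul_of_nonneg_left hmc (Real.exp_pos _).le
      _ = Real.exp (-(2*m*ε'^2)) := by
          rw [← Real.exp_add]
          congr 1
          rw [ht_def, hc_def]
          have hmne : (m:ℝ) ≠ 0 := ne_of_gt hmR
          field_simp
          ring
      _ ≤ 2 * Real.exp (-(ε^2*m/2)) := by
          rw [show (2:ℝ) * Real.exp (-(ε^2*m/2)) = Real.exp (Real.log 2 + -(ε^2*m/2)) by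
            rw [Real.exp_add, Real.exp_log two_pos]]
          refine Real.exp_le_exp.2 ?_
          have hrne : r ≠ 0 := ne_of_gt hr
          have hkey : (m:ℝ) * ε'^2 = (ε*r - 1)^2 := by
            simp only [hε'_def]
            rw [← hr2]
            field_simp
          have hlog2 : (0.6931471803 : ℝ) < Real.log 2 := Real.log_two_gt_d9
          have hsub2 : ε^2 * (m:ℝ) = (ε*r)^2 := by rw [← hr2]; ring
          clear_value ε' r
          have h1 : (2:ℝ)*m*ε'^2 = 2*(ε*r-1)^2 := by rw [mul_assoc, hkey]
          have e2 := sq_nonneg (ε*r - 4/3)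
          have q1 : (ε*r-1)^2 = (ε*r)^2 - 2*(ε*r) + 1 := by ring
          have q2 : (ε*r-4/3)^2 = (ε*r)^2 - (8/3)*(ε*r) + 16/9 := by ring
          linarith only [h1, e2, hsub2, hlog2, q1, q2]
  

end EmpAux

/-- paper's Corollary D.7, for an empirical distribution: concentration
of the empirical probability mass function: if X_1,…,X_m are i.i.d. with values in a
finite nonempty set S and common distribution p, and
`p̂(s) = (1/m)·Σ_i 𝟙[X_i = s]`, then for every ε > 0,
`P(max_s |p̂(s) − p(s)| > ε) ≤ 2·exp(−ε²·m/2)`. -/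
theorem empirical_pmf_concentration {Ω : Type} [MeasurableSpace Ω]
    (P : Measure Ω) [IsProbabilityMeasure P]
    (S : Type) [Fintype S] [Nonempty S] [DecidableEq S]
    [MeasurableSpace S] [MeasurableSingletonClass S]
    (p : S → ℝ) (hp0 : ∀ s, 0 ≤ p s) (hp1 : ∑ s, p s = 1)
    (m : ℕ) (X : Fin m → Ω → S) (hmeas : ∀ i, Measurable (X i))
    (hind : ProbabilityTheory.iIndepFun X P)
    (hdist : ∀ i s, (P {ω | X i ω = s}).toReal = p s)
    (ε : ℝ) (hε : 0 < ε) :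
    (P {ω | ∃ s, ε < |(1 / m : ℝ) * (∑ i, if X i ω = s then (1 : ℝ) else 0) - p s|}).toReal
      ≤ 2 * Real.exp (-(ε ^ 2 * m / 2)) := by
  classical
  set B : Set (Fin m → S) :=
    {x | ∃ s, ε < |(1 / m : ℝ) * (∑ i, if x i = s then (1 : ℝ) else 0) - p s|} with hB
  set A : Finset (Fin m → S) := Set.Finite.toFinset (Set.toFinite B) with hA_def
  have hmemA : ∀ x, x ∈ A ↔ x ∈ B := fun x => Set.Finite.mem_toFinset _
  set C : (Fin m → S) → Set Ω := fun x => ⋂ i, X i ⁻¹' {x i} with hC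
  have hCmeas : ∀ x, MeasurableSet (C x) :=
    fun x => MeasurableSet.iInter (fun i => hmeas i (measurableSet_singleton _))
  have hCmem : ∀ (ω : Ω) (x : Fin m → S), ω ∈ C x ↔ ∀ i, X i ω = x i := by
    intro ω x
    simp [hC, Set.mem_iInter]
  have hE : {ω | ∃ s, ε < |(1 / m : ℝ) * (∑ i, if X i ω = s then (1 : ℝ) else 0) - p s|}
      = ⋃ x ∈ A, C x := by
    ext ω
    simp only [Set.mem_setOf_eq, Set.mem_iUnion, exists_prop]
    constructor
    · intro h
      refine ⟨fun i => X i ω, ?_, ?_⟩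
      · rw [hmemA]
        exact h
      · rw [hCmem]
        intro i
        rfl
    · rintro ⟨x, hxA, hωC⟩
      rw [hmemA] at hxA
      rw [hCmem] at hωC
      simp only [hωC]
      exact hxA
  rw [hE]
  have hdisj : (A : Set (Fin m → S)).PairwiseDisjoint C := by
    intro x _ y _ hxy
    refine Set.disjoint_left.2 (fun ω h1 h2 => hxy ?_)
    exact funext (fun i => ((hCmem ω x).1 h1 i).symm.trans ((hCmem ω y).1 h2 i))
  rw [measure_biUnion_finset hdisj (fun x _ => hCmeas x)]
  rw [ENNReal.toReal_sum (fun x _ => measure_ne_top P _)]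
  have hPC : ∀ x : Fin m → S, (P (C x)).toReal = ∏ i, p (x i) := by
    intro x
    have h1 : C x = ⋂ i ∈ Finset.univ, X i ⁻¹' {x i} := by
      simp [hC]
    have h2 := hind.measure_inter_preimage_eq_mul Finset.univ
      (sets := fun i => {x i}) (fun i _ => measurableSet_singleton (x i))
    rw [h1, h2, ENNReal.toReal_prod]
    refine Finset.prod_congr rfl (fun i _ => ?_)
    have h3 : X i ⁻¹' {x i} = {ω | X i ω = x i} := rfl
    rw [h3, hdist i (x i)]
  rw [Finset.sum_congr rfl (fun x _ => hPC x)]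
  refine EmpAux.core_bound p hp0 hp1 m ε hε A (fun x hx => ?_)
  exact (hmemA x).1 hx
end
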